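/- Let α be a graphic degree sequence of length n. Then the simple graph on vertex set {1,…,n} whose edge set is exactly the set F(α) of forced edges of α is a threshold graph; equivalently, it contains no four distinct vertices inducing a subgraph isomorphic to 2K₂ (two disjoint edges), P₄ (a path on four vertices), or C₄ (a cycle on four vertices). -/

import Mathlib

/-- `G` is a (labeled) realization of the degree sequence `α` if the degree of
vertex `v` in `G` equals `α v` for every `v`. -/
def IsRealization {n : ℕ} (α : Fin n → ℕ) (G : SimpleGraph (Fin n)) : Prop :=
  ∀ v : Fin n, (G.neighborSet v).ncard = α v

/-- A sequence is graphic if it has a realization. -/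
def Graphic {n : ℕ} (α : Fin n → ℕ) : Prop :=
  ∃ G : SimpleGraph (Fin n), IsRealization α G

/-- The edge `{i,j}` is forced for `α` if it lies in every realization of `α`. -/
def ForcedEdge {n : ℕ} (α : Fin n → ℕ) (i j : Fin n) : Prop :=
  ∀ G : SimpleGraph (Fin n), IsRealization α G → G.Adj i j

/-- The edge `{i,j}` is forbidden for `α` if it lies in no realization of `α`. -/
def ForbiddenEdge {n : ℕ} (α : Fin n → ℕ) (i j : Fin n) : Prop :=
  ∀ G : SimpleGraph (Fin n), IsRealization α G → ¬ G.Adj i j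

/-- `α` majorizes `β`: every partial sum of `α` is at least the corresponding
partial sum of `β`, and the total sums agree. -/
def Majorizes {n : ℕ} (α β : Fin n → ℕ) : Prop :=
  (∀ k : ℕ, k ≤ n →
    ∑ i ∈ Finset.univ.filter (fun i : Fin n => (i : ℕ) < k), β i ≤
    ∑ i ∈ Finset.univ.filter (fun i : Fin n => (i : ℕ) < k), α i) ∧
  ∑ i, α i = ∑ i, β i

/-- The graph `2K₂` on four vertices: two disjoint edges. -/
def twoKtwo : SimpleGraph (Fin 4) := SimpleGraph.fromEdgeSet {s(0, 1), s(2, 3)}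

/-- The path `P₄` on four vertices. -/
def pathFour : SimpleGraph (Fin 4) := SimpleGraph.fromEdgeSet {s(0, 1), s(1, 2), s(2, 3)}

/-- The cycle `C₄` on four vertices. -/
def cycleFour : SimpleGraph (Fin 4) :=
  SimpleGraph.fromEdgeSet {s(0, 1), s(1, 2), s(2, 3), s(3, 0)}

/-- `G` contains an induced copy of the four-vertex graph `H`: there are four
distinct vertices of `G` inducing a subgraph isomorphic to `H`. -/
def HasInducedCopy {n : ℕ} (H : SimpleGraph (Fin 4)) (G : SimpleGraph (Fin n)) : Prop :=
  ∃ f : Fin 4 ↪ Fin n, ∀ x y : Fin 4, H.Adj x y ↔ G.Adj (f x) (f y)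

/-!
If `ij` is forced and `α i ≤ α k` for a third vertex `k`, then `kj` is forced as well: in a
realization without `kj`, counting degrees yields a neighbour `w ≠ i` of `k` that is not adjacent
to `i`, and the 2-switch trading `ij, kw` for `jk, wi` is a realization without `ij`. So if `ab`
and `cd` are forced edges, comparing `α a` with `α d` shows that `bd` or `ac` is forced. Each of
`2K₂`, `P₄`, `C₄` contains two edges `ab`, `cd` on four vertices with `ac`, `bd` non-edges.
-/

namespace SimpleGraph

variable {V : Type*} (G : SimpleGraph V) {a b c d : V}

def twoSwitch (a b c d : V) : SimpleGraph V :=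
  fromEdgeSet (G.edgeSet \ {s(a, b), s(c, d)} ∪ {s(b, c), s(d, a)})

theorem twoSwitch_adj {x y : V} :
    (G.twoSwitch a b c d).Adj x y ↔ x ≠ y ∧
      ((G.Adj x y ∧ s(x, y) ≠ s(a, b) ∧ s(x, y) ≠ s(c, d)) ∨ s(x, y) = s(b, c) ∨
        s(x, y) = s(d, a)) := by
  simp only [twoSwitch, fromEdgeSet_adj, Set.mem_union, Set.mem_sdiff, Set.mem_insert_iff,
    Set.mem_singleton_iff, mem_edgeSet, not_or]
  tauto

theorem twoSwitch_comm : G.twoSwitch a b c d = G.twoSwitch b a d c := by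
  ext x y
  simp only [twoSwitch_adj, Sym2.eq_swap (a := b) (b := a), Sym2.eq_swap (a := d) (b := c),
    Sym2.eq_swap (a := a) (b := d), Sym2.eq_swap (a := c) (b := b)]
  tauto

theorem twoSwitch_rotate : G.twoSwitch a b c d = G.twoSwitch c d a b := by
  ext x y
  simp only [twoSwitch_adj]
  tauto

theorem not_adj_twoSwitch (hac : a ≠ c) (hbd : b ≠ d) : ¬(G.twoSwitch a b c d).Adj a b := by
  simp only [twoSwitch_adj, ne_eq, Sym2.eq_iff]
  tauto

theorem neighborSet_twoSwitch_of_ne {v : V} (ha : v ≠ a) (hb : v ≠ b) (hc : v ≠ c)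
    (hd : v ≠ d) :
    (G.twoSwitch a b c d).neighborSet v = G.neighborSet v := by
  ext y
  simp only [mem_neighborSet, twoSwitch_adj, Sym2.eq_iff]
  grind [G.ne_of_adj]

theorem neighborSet_twoSwitch_left (hab : a ≠ b) (hac : a ≠ c) (had : a ≠ d) :
    (G.twoSwitch a b c d).neighborSet a = insert d (G.neighborSet a \ {b}) := by
  ext y
  simp only [mem_neighborSet, twoSwitch_adj, Sym2.eq_iff, Set.mem_insert_iff, Set.mem_sdiff,
    Set.mem_singleton_iff]
  grind [G.ne_of_adj]

theorem ncard_neighborSet_twoSwitch_left (hab : G.Adj a b) (hda : Gᶜ.Adj d a) (hac : a ≠ c) :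
    ((G.twoSwitch a b c d).neighborSet a).ncard = (G.neighborSet a).ncard := by
  rw [neighborSet_twoSwitch_left G hab.ne hac hda.ne.symm]
  exact Set.ncard_exchange (fun h => hda.2 (G.adj_symm h)) hab

theorem ncard_neighborSet_twoSwitch (hab : G.Adj a b) (hcd : G.Adj c d) (hbc : Gᶜ.Adj b c)
    (hda : Gᶜ.Adj d a) (hac : a ≠ c) (hbd : b ≠ d) (v : V) :
    ((G.twoSwitch a b c d).neighborSet v).ncard = (G.neighborSet v).ncard := by
  by_cases hva : v = a
  · subst hva
    exact G.ncard_neighborSet_twoSwitch_left hab hda hac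
  by_cases hvb : v = b
  · subst hvb
    rw [twoSwitch_comm]
    exact G.ncard_neighborSet_twoSwitch_left hab.symm hbc.symm hbd
  by_cases hvc : v = c
  · subst hvc
    rw [twoSwitch_rotate]
    exact G.ncard_neighborSet_twoSwitch_left hcd hbc hac.symm
  by_cases hvd : v = d
  · subst hvd
    rw [twoSwitch_rotate, twoSwitch_comm]
    exact G.ncard_neighborSet_twoSwitch_left hcd.symm hda.symm hbd.symm
  rw [G.neighborSet_twoSwitch_of_ne hva hvb hvc hvd]

variable [Finite V]

theorem ncard_neighborSet_diff_add_ncard (i k : V) :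
    (G.neighborSet k \ {i}).ncard + (G.neighborSet i).ncard =
      (G.neighborSet i \ {k}).ncard + (G.neighborSet k).ncard := by
  by_cases hik : G.Adj i k
  · rw [← Set.ncard_sdiff_singleton_add_one (show i ∈ G.neighborSet k from hik.symm),
      ← Set.ncard_sdiff_singleton_add_one (show k ∈ G.neighborSet i from hik)]
    ring
  · rw [Set.sdiff_singleton_eq_self (show i ∉ G.neighborSet k from fun h => hik h.symm),
      Set.sdiff_singleton_eq_self (show k ∉ G.neighborSet i from hik), add_comm]

theorem exists_adj_not_adj_of_ncard_le {i j k : V} (hij : G.Adj i j) (hkj : Gᶜ.Adj k j)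
    (hle : (G.neighborSet i).ncard ≤ (G.neighborSet k).ncard) :
    ∃ w, G.Adj k w ∧ w ≠ i ∧ ¬G.Adj i w := by
  by_contra! h
  have hsub : G.neighborSet k \ {i} ⊆ (G.neighborSet i \ {k}) \ {j} := by
    rintro w ⟨hkw, hwi⟩
    refine ⟨⟨h w hkw hwi, (G.ne_of_adj hkw).symm⟩, ?_⟩
    rintro rfl
    exact hkj.2 hkw
  have hj : j ∈ G.neighborSet i \ {k} := ⟨hij, hkj.1.symm⟩
  have hlt := (Set.ncard_le_ncard hsub).trans_lt (Set.ncard_sdiff_singleton_lt_of_mem hj)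
  have := G.ncard_neighborSet_diff_add_ncard i k
  omega

end SimpleGraph

namespace ForcedEdge

variable {n : ℕ} {α : Fin n → ℕ} {a b c d : Fin n}

theorem symm (h : ForcedEdge α a b) : ForcedEdge α b a :=
  fun G hG => (h G hG).symm

theorem of_le (hab : ForcedEdge α a b) (hle : α a ≤ α c) (hca : c ≠ a) (hcb : c ≠ b) :
    ForcedEdge α c b := by
  intro G hG
  by_contra hGcb
  have hGab := hab G hG
  obtain ⟨d, hcd, hda, had⟩ := G.exists_adj_not_adj_of_ncard_le hGab ⟨hcb, hGcb⟩
    (by rw [hG a, hG c]; exact hle)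
  have hbd : b ≠ d := by
    rintro rfl
    exact hGcb hcd
  have hswitch : IsRealization α (G.twoSwitch a b c d) := fun v =>
    (G.ncard_neighborSet_twoSwitch hGab hcd ⟨hcb.symm, fun h => hGcb h.symm⟩
      ⟨hda, fun h => had h.symm⟩ hca.symm hbd v).trans (hG v)
  exact G.not_adj_twoSwitch hca.symm hbd (hab _ hswitch)

theorem or_forcedEdge (hab : ForcedEdge α a b) (hcd : ForcedEdge α c d) (hac : a ≠ c)
    (had : a ≠ d) (hbd : b ≠ d) : ForcedEdge α a c ∨ ForcedEdge α b d := by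
  rcases le_total (α a) (α d) with h | h
  · exact Or.inr (hab.of_le h had.symm hbd.symm).symm
  · exact Or.inl (hcd.symm.of_le h had hac)

end ForcedEdge

theorem not_hasInducedCopy_of_adj_or_adj {n : ℕ} {G : SimpleGraph (Fin n)}
    {H : SimpleGraph (Fin 4)}
    (hG : ∀ a b c d, G.Adj a b → G.Adj c d → a ≠ c → a ≠ d → b ≠ d →
      G.Adj a c ∨ G.Adj b d)
    (h01 : H.Adj 0 1) (h23 : H.Adj 2 3) (h02 : ¬H.Adj 0 2) (h13 : ¬H.Adj 1 3) :
    ¬HasInducedCopy H G := by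
  rintro ⟨f, hf⟩
  have hne {x y : Fin 4} (hxy : x ≠ y) : f x ≠ f y := f.injective.ne hxy
  rcases hG _ _ _ _ ((hf 0 1).1 h01) ((hf 2 3).1 h23) (hne (by decide)) (hne (by decide))
    (hne (by decide)) with h | h
  · exact h02 ((hf 0 2).2 h)
  · exact h13 ((hf 1 3).2 h)

theorem fromRel_forcedEdge_adj {n : ℕ} {α : Fin n → ℕ} {a b : Fin n} :
    (SimpleGraph.fromRel (ForcedEdge α)).Adj a b ↔ a ≠ b ∧ ForcedEdge α a b := by
  rw [SimpleGraph.fromRel_adj, or_iff_left_of_imp ForcedEdge.symm]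

theorem fromRel_forcedEdge_adj_or_adj {n : ℕ} (α : Fin n → ℕ) (a b c d : Fin n)
    (hab : (SimpleGraph.fromRel (ForcedEdge α)).Adj a b)
    (hcd : (SimpleGraph.fromRel (ForcedEdge α)).Adj c d) (hac : a ≠ c) (had : a ≠ d)
    (hbd : b ≠ d) :
    (SimpleGraph.fromRel (ForcedEdge α)).Adj a c ∨
      (SimpleGraph.fromRel (ForcedEdge α)).Adj b d := by
  simp only [fromRel_forcedEdge_adj] at hab hcd ⊢
  exact (hab.2.or_forcedEdge hcd.2 hac had hbd).imp (⟨hac, ·⟩) (⟨hbd, ·⟩)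

theorem forced_graph_is_threshold_general {n : ℕ} (α : Fin n → ℕ) :
    ¬ HasInducedCopy twoKtwo (SimpleGraph.fromRel (fun i j : Fin n => ForcedEdge α i j)) ∧
    ¬ HasInducedCopy pathFour (SimpleGraph.fromRel (fun i j : Fin n => ForcedEdge α i j)) ∧
    ¬ HasInducedCopy cycleFour (SimpleGraph.fromRel (fun i j : Fin n => ForcedEdge α i j)) := by
  have hF := fromRel_forcedEdge_adj_or_adj α
  refine ⟨not_hasInducedCopy_of_adj_or_adj hF ?_ ?_ ?_ ?_,
    not_hasInducedCopy_of_adj_or_adj hF ?_ ?_ ?_ ?_,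
    not_hasInducedCopy_of_adj_or_adj hF ?_ ?_ ?_ ?_⟩ <;>
    simp [twoKtwo, pathFour, cycleFour]

/-- for a graphic nonincreasing degree sequence `α`, the simple
graph on `{1,…,n}` whose edge set is exactly the set of forced edges of `α` is a
threshold graph: it has no induced subgraph isomorphic to `2K₂`, `P₄`, or `C₄`. -/
theorem forced_graph_is_threshold {n : ℕ} (α : Fin n → ℕ)
    (hα : Antitone α) (hb : ∀ v, α v ≤ n - 1) (hg : Graphic α) :
    ¬ HasInducedCopy twoKtwo (SimpleGraph.fromRel (fun i j : Fin n => ForcedEdge α i j)) ∧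
    ¬ HasInducedCopy pathFour (SimpleGraph.fromRel (fun i j : Fin n => ForcedEdge α i j)) ∧
    ¬ HasInducedCopy cycleFour (SimpleGraph.fromRel (fun i j : Fin n => ForcedEdge α i j)) :=
  forced_graph_is_threshold_general α
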